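/- Equip ℝ³ with the norm ‖(x,y,z)‖ := max(|x| + |z|, √(x² + y²)). Then its dual unit ball B° ⊂ (ℝ³)* ≅ ℝ³ equals the convex hull of the square with vertices (±1, 0, ±1) together with the circle {(x,y,0) : x² + y² = 1}; moreover the point (1,0,0) belongs to B° but is not an extreme point of B°, while each point (cos(1/n), sin(1/n), 0), n ≥ 1, is an extreme point of B°. -/

import Mathlib

open Set

noncomputable section

/-- The norm `‖(x,y,z)‖ = max(|x| + |z|, √(x² + y²))` on `ℝ³`. -/
def N3 (p : ℝ × ℝ × ℝ) : ℝ :=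
  max (|p.1| + |p.2.2|) (Real.sqrt (p.1 ^ 2 + p.2.1 ^ 2))

/-- The standard pairing on `ℝ³`, identifying `(ℝ³)*` with `ℝ³`. -/
def dot3 (a b : ℝ × ℝ × ℝ) : ℝ := a.1 * b.1 + a.2.1 * b.2.1 + a.2.2 * b.2.2

/-- The dual unit ball `B° = {y : ⟨y,x⟩ ≥ −1 for all x with ‖x‖ ≤ 1}`. -/
def dualBall3 : Set (ℝ × ℝ × ℝ) := {y | ∀ x : ℝ × ℝ × ℝ, N3 x ≤ 1 → -1 ≤ dot3 y x}

/-- The square with vertices `(±1, 0, ±1)`. -/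
def square3 : Set (ℝ × ℝ × ℝ) :=
  {((1 : ℝ), (0 : ℝ), (1 : ℝ)), (1, 0, -1), (-1, 0, 1), (-1, 0, -1)}

/-- The circle `{(x,y,0) : x² + y² = 1}`. -/
def circle3 : Set (ℝ × ℝ × ℝ) := {p | p.1 ^ 2 + p.2.1 ^ 2 = 1 ∧ p.2.2 = 0}


/-!
The norm is the maximum of the seminorms `|x| + |z|` and `√(x² + y²)`, whose dual balls are the
filled square `[-1,1] × {0} × [-1,1]` and the unit disk in the plane `z = 0`; the dual ball of the
maximum is the convex hull of their union. Concretely, pairing `a ∈ B°` with a well-chosen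
`x ∈ B` gives `|a₃| + √(((|a₁| - |a₃|)⁺)² + a₂²) ≤ 1`, and every `a` satisfying this bound is
`|a₃|` times a point of the square plus `1 - |a₃|` times a point of the disk.

A circle point `(c, t, 0)` with `t ≠ 0` is exposed by the functional `⟨(c, t, 0), ·⟩`: on `B°`
it is at most `1`, and pairing with `(c, t, ±(1 - |c|)) ∈ B` forces the third coordinate of
any maximiser to vanish. The point `(1, 0, 0)` is the midpoint of the square's edge from
`(1, 0, -1)` to `(1, 0, 1)`.
-/

lemma le_sqrt_sq_add_sq (x y : ℝ) : x ≤ √(x ^ 2 + y ^ 2) :=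
  (le_abs_self x).trans (Real.abs_le_sqrt (le_add_of_nonneg_right (sq_nonneg y)))

lemma abs_sign_le_one (x : ℝ) : |(SignType.sign x : ℝ)| ≤ 1 := by
  rcases lt_trichotomy x 0 with hx | hx | hx <;> simp [hx]

lemma abs_sub_clamp_le (a l : ℝ) : |a - max (-l) (min l a)| ≤ max (|a| - l) 0 := by
  rw [abs_le]; constructor <;> grind

lemma mul_div_cancel_of_abs_le {x t : ℝ} (h : |x| ≤ t) : t * (x / t) = x :=
  mul_div_cancel_of_imp' fun ht => abs_nonpos_iff.1 (ht ▸ h)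

lemma abs_div_le_one_of_abs_le {x t : ℝ} (h : |x| ≤ t) : |x / t| ≤ 1 := by
  rw [abs_div]
  exact div_le_one_of_le₀ (h.trans (le_abs_self t)) (abs_nonneg t)

lemma N3_le_one_iff (x : ℝ × ℝ × ℝ) :
    N3 x ≤ 1 ↔ |x.1| + |x.2.2| ≤ 1 ∧ x.1 ^ 2 + x.2.1 ^ 2 ≤ 1 := by
  simp only [N3, max_le_iff, Real.sqrt_le_one]

lemma N3_neg (x : ℝ × ℝ × ℝ) : N3 (-x) = N3 x := by
  simp [N3]

lemma dot3_neg (a x : ℝ × ℝ × ℝ) : dot3 a (-x) = -dot3 a x := by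
  simp only [dot3, Prod.fst_neg, Prod.snd_neg]; ring

lemma dot3_le_one_of_mem_dualBall3 {a : ℝ × ℝ × ℝ} (ha : a ∈ dualBall3) {x : ℝ × ℝ × ℝ}
    (hx : N3 x ≤ 1) : dot3 a x ≤ 1 := by
  have := ha (-x) (by rwa [N3_neg])
  rw [dot3_neg] at this
  linarith

lemma convex_dualBall3 : Convex ℝ dualBall3 := by
  intro a ha b hb s t hs ht hst x hx
  have hab : dot3 (s • a + t • b) x = s * dot3 a x + t * dot3 b x := by
    simp only [dot3, Prod.fst_add, Prod.snd_add, Prod.smul_fst, Prod.smul_snd, smul_eq_mul]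
    ring
  rw [hab]
  nlinarith [ha x hx, hb x hx]

lemma square3_subset_dualBall3 : square3 ⊆ dualBall3 := by
  intro p hp x hx
  obtain ⟨hx13, -⟩ := (N3_le_one_iff x).1 hx
  have h1 := abs_le.1 (le_refl |x.1|)
  have h3 := abs_le.1 (le_refl |x.2.2|)
  rcases hp with rfl | rfl | rfl | rfl <;> simp only [dot3] <;> linarith

lemma circle3_subset_dualBall3 : circle3 ⊆ dualBall3 := by
  rintro ⟨p₁, p₂, p₃⟩ ⟨hp, rfl : p₃ = 0⟩ x hx
  obtain ⟨-, hx12⟩ := (N3_le_one_iff x).1 hx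
  simp only [dot3] at hp ⊢
  nlinarith [sq_nonneg (p₁ + x.1), sq_nonneg (p₂ + x.2.1)]

lemma convexHull_subset_dualBall3 : convexHull ℝ (square3 ∪ circle3) ⊆ dualBall3 :=
  convexHull_min (union_subset square3_subset_dualBall3 circle3_subset_dualBall3)
    convex_dualBall3

/-- The dual norm of `N3`. -/
def dualNorm3 (a : ℝ × ℝ × ℝ) : ℝ :=
  |a.2.2| + √(max (|a.1| - |a.2.2|) 0 ^ 2 + a.2.1 ^ 2)

lemma dualNorm3_le_one_of_mem_dualBall3 {a : ℝ × ℝ × ℝ} (ha : a ∈ dualBall3) :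
    dualNorm3 a ≤ 1 := by
  set m := max (|a.1| - |a.2.2|) 0
  set ρ := √(m ^ 2 + a.2.1 ^ 2)
  have hm : 0 ≤ m := le_max_right _ _
  have hmρ : m ≤ ρ := le_sqrt_sq_add_sq m a.2.1
  have hρ : ρ ^ 2 = m ^ 2 + a.2.1 ^ 2 := Real.sq_sqrt (by positivity)
  have hmm : (|a.1| - |a.2.2|) * m = m ^ 2 := by
    rcases max_cases (|a.1| - |a.2.2|) 0 with ⟨h, -⟩ | ⟨h, -⟩ <;> simp only [m, h] <;> ring
  set u := m / ρ
  have hu0 : 0 ≤ u := by positivity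
  have hu1 : u ≤ 1 := div_le_one_of_le₀ hmρ (hm.trans hmρ)
  -- `(±u, a₂/ρ, ±(1 - u))` is a point of `B` at which `⟨a, ·⟩` equals `dualNorm3 a`.
  have hx : N3 (SignType.sign a.1 * u, a.2.1 / ρ, SignType.sign a.2.2 * (1 - u)) ≤ 1 := by
    rw [N3_le_one_iff, abs_mul, abs_mul, abs_of_nonneg hu0, abs_of_nonneg (sub_nonneg.2 hu1)]
    refine ⟨?_, ?_⟩
    · nlinarith [abs_sign_le_one a.1, abs_sign_le_one a.2.2]
    · have hs : |(SignType.sign a.1 : ℝ)| ^ 2 ≤ 1 := by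
        nlinarith [abs_sign_le_one a.1, abs_nonneg (SignType.sign a.1 : ℝ)]
      calc (SignType.sign a.1 * u) ^ 2 + (a.2.1 / ρ) ^ 2
          ≤ u ^ 2 + (a.2.1 / ρ) ^ 2 := by
            rw [mul_pow, ← sq_abs (SignType.sign a.1 : ℝ)]; nlinarith [sq_nonneg u]
        _ = ρ ^ 2 / ρ ^ 2 := by rw [div_pow, div_pow, ← add_div, hρ]
        _ ≤ 1 := div_self_le_one _
  have hdot : dot3 a (SignType.sign a.1 * u, a.2.1 / ρ, SignType.sign a.2.2 * (1 - u)) =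
      |a.2.2| + ρ := by
    simp only [dot3, ← mul_assoc, self_mul_sign]
    calc |a.1| * u + a.2.1 * (a.2.1 / ρ) + |a.2.2| * (1 - u)
        = |a.2.2| + ((|a.1| - |a.2.2|) * m + a.2.1 ^ 2) / ρ := by simp only [u]; ring
      _ = |a.2.2| + ρ := by rw [hmm, ← hρ, pow_two, mul_self_div_self]
  have := dot3_le_one_of_mem_dualBall3 ha hx
  rw [dualNorm3]
  linarith

lemma sq_add_sq_le_one_of_dualNorm3_le_one {a : ℝ × ℝ × ℝ} (ha : dualNorm3 a ≤ 1) :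
    a.1 ^ 2 + a.2.1 ^ 2 ≤ 1 := by
  rw [dualNorm3] at ha
  set l := |a.2.2|
  set m := max (|a.1| - l) 0
  set ρ := √(m ^ 2 + a.2.1 ^ 2)
  have hl : 0 ≤ l := abs_nonneg _
  have hm : 0 ≤ m := le_max_right _ _
  have hmρ : m ≤ ρ := le_sqrt_sq_add_sq m a.2.1
  have hρ : ρ ^ 2 = m ^ 2 + a.2.1 ^ 2 := Real.sq_sqrt (by positivity)
  have h1 : |a.1| ≤ l + m := by linarith [le_max_left (|a.1| - l) 0]
  calc a.1 ^ 2 + a.2.1 ^ 2 = |a.1| ^ 2 + a.2.1 ^ 2 := by rw [sq_abs]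
    _ ≤ (l + m) ^ 2 + a.2.1 ^ 2 := by gcongr
    _ ≤ (l + ρ) ^ 2 := by nlinarith
    _ ≤ 1 := by nlinarith [Real.sqrt_nonneg (m ^ 2 + a.2.1 ^ 2)]

lemma square3_eq_prod :
    square3 = ({-1, 1} : Set ℝ) ×ˢ ({0} : Set ℝ) ×ˢ ({-1, 1} : Set ℝ) := by
  ext ⟨x, y, z⟩
  simp only [square3, mem_insert_iff, mem_singleton_iff, Prod.mk.injEq, mem_prod]
  tauto

lemma convexHull_square3 : convexHull ℝ square3 = Icc (-1) 1 ×ˢ {0} ×ˢ Icc (-1) 1 := by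
  rw [square3_eq_prod, convexHull_prod, convexHull_prod, convexHull_singleton, convexHull_pair,
    segment_eq_Icc (by norm_num)]

lemma mem_convexHull_circle3 {x y : ℝ} (h : x ^ 2 + y ^ 2 ≤ 1) :
    (x, y, 0) ∈ convexHull ℝ circle3 := by
  set w := √(1 - x ^ 2)
  have hw : w ^ 2 = 1 - x ^ 2 := Real.sq_sqrt (by nlinarith [sq_nonneg y])
  have hchord : ({x} : Set ℝ) ×ˢ ({-w, w} : Set ℝ) ×ˢ ({0} : Set ℝ) ⊆ circle3 := by
    rintro ⟨x', y', z'⟩ ⟨hx' : x' = x, hy' : y' = -w ∨ y' = w, hz' : z' = 0⟩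
    refine ⟨?_, hz'⟩
    rcases hy' with rfl | rfl <;> simp only [hx', neg_sq] <;> linarith
  refine convexHull_mono hchord ?_
  rw [convexHull_prod, convexHull_prod, convexHull_singleton, convexHull_singleton,
    convexHull_pair, segment_eq_Icc (neg_le_self (Real.sqrt_nonneg _))]
  exact ⟨rfl, abs_le.1 (Real.abs_le_sqrt (by linarith)), rfl⟩

lemma mem_convexHull_of_dualNorm3_le_one {a : ℝ × ℝ × ℝ} (ha : dualNorm3 a ≤ 1) :
    a ∈ convexHull ℝ (square3 ∪ circle3) := by
  set l := |a.2.2|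
  set c := max (-l) (min l a.1)
  set m := max (|a.1| - l) 0
  set ρ := √(m ^ 2 + a.2.1 ^ 2)
  have hl : 0 ≤ l := abs_nonneg _
  have hρ : ρ ≤ 1 - l := by rw [dualNorm3] at ha; linarith
  have hc : |c| ≤ l := abs_le.2 ⟨le_max_left _ _, max_le (by linarith) (min_le_left _ _)⟩
  have h1m : |a.1 - c| ≤ m := abs_sub_clamp_le a.1 l
  have h1 : |a.1 - c| ≤ 1 - l := (h1m.trans (le_sqrt_sq_add_sq m a.2.1)).trans hρ
  have h2 : |a.2.1| ≤ 1 - l :=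
    (Real.abs_le_sqrt (le_add_of_nonneg_left (sq_nonneg _))).trans hρ
  have hρ2 : m ^ 2 + a.2.1 ^ 2 ≤ (1 - l) ^ 2 := by
    rw [← Real.sq_sqrt (by positivity : 0 ≤ m ^ 2 + a.2.1 ^ 2)]
    exact pow_le_pow_left₀ (Real.sqrt_nonneg _) hρ 2
  have hs : (c / l, 0, a.2.2 / l) ∈ convexHull ℝ square3 := by
    rw [convexHull_square3]
    exact ⟨abs_le.1 (abs_div_le_one_of_abs_le hc), rfl,
      abs_le.1 (abs_div_le_one_of_abs_le le_rfl)⟩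
  have hd : ((a.1 - c) / (1 - l), a.2.1 / (1 - l), 0) ∈ convexHull ℝ circle3 := by
    refine mem_convexHull_circle3 ?_
    rw [div_pow, div_pow, ← add_div]
    refine div_le_one_of_le₀ ?_ (sq_nonneg _)
    nlinarith [sq_le_sq.2 (h1m.trans (le_abs_self m))]
  -- For `l = 0` or `l = 1` a summand has coefficient `0`, so its junk division by `0` is harmless.
  have hcomb : l • (c / l, 0, a.2.2 / l) + (1 - l) • ((a.1 - c) / (1 - l), a.2.1 / (1 - l), 0)
      = a := by
    ext <;> simp only [Prod.fst_add, Prod.snd_add, Prod.smul_mk, smul_eq_mul,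
      mul_div_cancel_of_abs_le hc, mul_div_cancel_of_abs_le h1, mul_div_cancel_of_abs_le h2,
      mul_div_cancel_of_abs_le (le_refl l)] <;> ring
  rw [← hcomb]
  exact convex_convexHull ℝ _ (convexHull_mono subset_union_left hs)
    (convexHull_mono subset_union_right hd) hl ((Real.sqrt_nonneg _).trans hρ) (by ring)

lemma dualBall3_eq_convexHull : dualBall3 = convexHull ℝ (square3 ∪ circle3) :=
  Subset.antisymm
    (fun _ ha => mem_convexHull_of_dualNorm3_le_one (dualNorm3_le_one_of_mem_dualBall3 ha))
    convexHull_subset_dualBall3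

lemma mem_exposedPoints_dualBall3 {c t : ℝ} (hct : c ^ 2 + t ^ 2 = 1) (ht : t ≠ 0) :
    (c, t, 0) ∈ dualBall3.exposedPoints ℝ := by
  have hc : |c| < 1 := by
    rw [← sq_lt_one_iff_abs_lt_one]; linarith [sq_pos_of_ne_zero ht]
  have hface : ∀ y ∈ dualBall3, ∀ s : ℝ, |s| ≤ 1 - |c| →
      c * y.1 + t * y.2.1 + s * y.2.2 ≤ 1 := fun y hy s hs => by
    have := dot3_le_one_of_mem_dualBall3 hy
      ((N3_le_one_iff (c, t, s)).2 ⟨by simp only; linarith, hct.le⟩)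
    simp only [dot3] at this
    linarith
  refine ⟨circle3_subset_dualBall3 ⟨hct, rfl⟩,
    c • ContinuousLinearMap.fst ℝ ℝ (ℝ × ℝ) +
      t • (ContinuousLinearMap.fst ℝ ℝ ℝ).comp (ContinuousLinearMap.snd ℝ ℝ (ℝ × ℝ)),
    fun y hy => ?_⟩
  simp only [add_apply, smul_apply, ContinuousLinearMap.coe_fst', ContinuousLinearMap.coe_comp,
    ContinuousLinearMap.coe_snd', Function.comp_apply, smul_eq_mul]
  refine ⟨by nlinarith [hface y hy 0 (by simp; linarith)], fun hle => ?_⟩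
  have hy12 := sq_add_sq_le_one_of_dualNorm3_le_one (dualNorm3_le_one_of_mem_dualBall3 hy)
  have h1 : y.1 = c := by nlinarith [sq_nonneg (y.1 - c), sq_nonneg (y.2.1 - t)]
  have h2 : y.2.1 = t := by nlinarith [sq_nonneg (y.1 - c), sq_nonneg (y.2.1 - t)]
  have hpos : 0 < 1 - |c| := by linarith
  have h3 : y.2.2 = 0 := by
    have := hface y hy (1 - |c|) (by rw [abs_of_pos hpos])
    have := hface y hy (-(1 - |c|)) (by rw [abs_neg, abs_of_pos hpos])
    nlinarith
  exact Prod.ext h1 (Prod.ext h2 h3)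

lemma one_zero_zero_notMem_extremePoints_dualBall3 :
    ((1 : ℝ), (0 : ℝ), (0 : ℝ)) ∉ dualBall3.extremePoints ℝ := by
  intro h
  have hup : ((1 : ℝ), (0 : ℝ), (1 : ℝ)) ∈ dualBall3 :=
    square3_subset_dualBall3 (by simp [square3])
  have hdown : ((1 : ℝ), (0 : ℝ), (-1 : ℝ)) ∈ dualBall3 :=
    square3_subset_dualBall3 (by simp [square3])
  have hmid : ((1 : ℝ), (0 : ℝ), (0 : ℝ)) ∈ openSegment ℝ (1, 0, 1) (1, 0, -1) :=
    ⟨1 / 2, 1 / 2, by norm_num, by norm_num, by norm_num, by ext <;> norm_num⟩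
  simpa using h.2 hup hdown hmid

/-- The dual unit ball of the norm `max(|x| + |z|, √(x² + y²))` on `ℝ³` is the convex
hull of the square with vertices `(±1,0,±1)` and the circle `{(x,y,0) : x²+y²=1}`;
the point `(1,0,0)` belongs to it but is not an extreme point, while each point
`(cos(1/n), sin(1/n), 0)`, `n ≥ 1`, is an extreme point. -/
theorem dualBall3_description :
    dualBall3 = convexHull ℝ (square3 ∪ circle3) ∧
    ((1 : ℝ), (0 : ℝ), (0 : ℝ)) ∈ dualBall3 ∧
    ((1 : ℝ), (0 : ℝ), (0 : ℝ)) ∉ dualBall3.extremePoints ℝ ∧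
    ∀ n : ℕ, 1 ≤ n →
      ((Real.cos (1 / n), Real.sin (1 / n), 0) : ℝ × ℝ × ℝ) ∈
        dualBall3.extremePoints ℝ := by
  refine ⟨dualBall3_eq_convexHull, circle3_subset_dualBall3 ⟨by norm_num, rfl⟩,
    one_zero_zero_notMem_extremePoints_dualBall3, fun n hn => ?_⟩
  have hn' : (1 : ℝ) ≤ n := by exact_mod_cast hn
  have hpos : 0 < 1 / (n : ℝ) := by positivity
  have hlt : 1 / (n : ℝ) < Real.pi :=
    (div_le_one_of_le₀ hn' (by positivity)).trans_lt (by linarith [Real.pi_gt_three])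
  exact exposedPoints_subset_extremePoints <| mem_exposedPoints_dualBall3
    (Real.cos_sq_add_sin_sq _) (Real.sin_pos_of_pos_of_lt_pi hpos hlt).ne'
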